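/- Context Tree Weighting computes the Bayesian mixture: at the root λ of a depth-D context tree, the weighted probability satisfies P^λ_w(x_{1:t} | a_{1:t}) = ∑_{M ∈ C_D} 2^{−Γ_D(M)} Pr(x_{1:t} | M, a_{1:t}), where Pr(x_{1:t} | M, a_{1:t}) = ∏_{l ∈ L(M)} Pr_kt(subsequence of bits of x_{1:t} routed to leaf l of M). -/

import Mathlib

/-- KT conditional probability of the next bit. -/
noncomputable def ktCond (a b : ℕ) (y : Bool) : ℝ :=
  if y then ((b : ℝ) + 1/2) / ((a : ℝ) + (b : ℝ) + 1)
  else ((a : ℝ) + 1/2) / ((a : ℝ) + (b : ℝ) + 1)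

noncomputable def ktBlockAux : ℕ → ℕ → List Bool → ℝ
  | _, _, [] => 1
  | a, b, y :: ys =>
      ktCond a b y * ktBlockAux (if y then a else a + 1) (if y then b + 1 else b) ys

/-- KT block probability `Pr_kt`. -/
noncomputable def ktBlock (s : List Bool) : ℝ := ktBlockAux 0 0 s

/-- A model of a prediction suffix tree. -/
inductive BinTree where
  | leaf : BinTree
  | node : BinTree → BinTree → BinTree
deriving DecidableEq

namespace BinTree

def depth : BinTree → ℕ
  | leaf => 0
  | node l r => max l.depth r.depth + 1

def numNodes : BinTree → ℕ
  | leaf => 1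
  | node l r => l.numNodes + r.numNodes + 1

def leavesAt : ℕ → BinTree → ℕ
  | 0, leaf => 1
  | 0, node _ _ => 0
  | _ + 1, leaf => 0
  | d + 1, node l r => leavesAt d l + leavesAt d r

/-- `Γ_D(M)`: nodes of `M` minus leaves of `M` at depth `D`. -/
def cost (D : ℕ) (M : BinTree) : ℕ := M.numNodes - leavesAt D M

end BinTree

/- `rt s` denotes the subsequence of the bits of `x_{1:t}` routed (by the
action-conditional context of `a_{1:t}` and `x_{1:t}`) to the context-tree node
with path description `s`. -/

/-- The CTW weighted probability `P^n_w` at a node with path `s` and remaining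
depth `k`: `P^n_w = Pr_kt` at leaves, and
`P^n_w = ½·Pr_kt + ½·P^{n_l}_w·P^{n_r}_w` at internal nodes. -/
noncomputable def Pw (rt : List Bool → List Bool) : ℕ → List Bool → ℝ
  | 0, s => ktBlock (rt s)
  | k + 1, s =>
      (1/2) * ktBlock (rt s) +
        (1/2) * (Pw rt k (s ++ [true]) * Pw rt k (s ++ [false]))

/-- `Pr(x_{1:t} | M, a_{1:t})` for a tree model `M` rooted at path `s`:
the product over the leaves `l` of `M` of the KT block probabilities of the
bits routed to the node with path `p(s)p(l)`. -/
noncomputable def modelProb (rt : List Bool → List Bool) : BinTree → List Bool → ℝ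
  | .leaf, s => ktBlock (rt s)
  | .node l r, s => modelProb rt l (s ++ [true]) * modelProb rt r (s ++ [false])

/-! By induction on the depth: the trees of depth `≤ k + 1` are the leaf, of prior `1/2`, and the
nodes `node l r` with `l, r` of depth `≤ k`, whose prior is `½ · prior l · prior r` and whose model
probability is the product of those of `l` and `r`; so the sum over node trees factors into the
product of the two subtree sums, which is the recursion defining `Pw`. -/

namespace BinTree

lemma leavesAt_le_numNodes : ∀ (d : ℕ) (M : BinTree), leavesAt d M ≤ numNodes M
  | 0, leaf | 0, node _ _ | _ + 1, leaf => by simp [leavesAt, numNodes]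
  | d + 1, node l r => by
    have := leavesAt_le_numNodes d l
    have := leavesAt_le_numNodes d r
    simp only [leavesAt, numNodes]
    omega

lemma cost_succ_node (k : ℕ) (l r : BinTree) :
    cost (k + 1) (node l r) = cost k l + cost k r + 1 := by
  -- `cost` is a truncated subtraction; these bounds make it an honest one
  have := leavesAt_le_numNodes k l
  have := leavesAt_le_numNodes k r
  simp only [cost, numNodes, leavesAt]
  omega

noncomputable def prior (D : ℕ) (M : BinTree) : ℝ := (2 : ℝ) ^ (-(cost D M : ℤ))

lemma prior_zero_leaf : prior 0 leaf = 1 := by simp [prior, cost, numNodes, leavesAt]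

lemma prior_succ_leaf (k : ℕ) : prior (k + 1) leaf = 1 / 2 := by
  simp [prior, cost, numNodes, leavesAt]

lemma prior_succ_node (k : ℕ) (l r : BinTree) :
    prior (k + 1) (node l r) = 1 / 2 * (prior k l * prior k r) := by
  simp only [prior, zpow_neg, zpow_natCast, cost_succ_node, pow_succ, pow_add]
  ring

@[simps]
def nodeEmbedding : BinTree × BinTree ↪ BinTree where
  toFun p := node p.1 p.2
  inj' := fun ⟨_, _⟩ ⟨_, _⟩ h => by cases h; rfl

def treesUpTo : ℕ → Finset BinTree
  | 0 => {leaf}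
  | k + 1 => insert leaf ((treesUpTo k ×ˢ treesUpTo k).map nodeEmbedding)

lemma mem_treesUpTo : ∀ {D : ℕ} {M : BinTree}, M ∈ treesUpTo D ↔ M.depth ≤ D
  | 0, leaf | 0, node _ _ | _ + 1, leaf => by simp [treesUpTo, depth]
  | k + 1, node l r => by
    simp [treesUpTo, depth, mem_treesUpTo]

end BinTree

open BinTree

lemma Pw_eq_sum_treesUpTo (rt : List Bool → List Bool) :
    ∀ (D : ℕ) (s : List Bool), Pw rt D s = ∑ M ∈ treesUpTo D, prior D M * modelProb rt M s
  | 0, s => by simp [Pw, treesUpTo, prior_zero_leaf, modelProb]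
  | k + 1, s => by
    rw [Pw, treesUpTo, Finset.sum_insert (by simp), Finset.sum_map,
      Finset.sum_product, Pw_eq_sum_treesUpTo rt k, Pw_eq_sum_treesUpTo rt k,
      Finset.sum_mul_sum, Finset.mul_sum, prior_succ_leaf, modelProb]
    congr 1
    refine Finset.sum_congr rfl fun l _ => ?_
    rw [Finset.mul_sum]
    refine Finset.sum_congr rfl fun r _ => ?_
    rw [nodeEmbedding_apply, prior_succ_node, modelProb]
    ring

/-- CTW computes the Bayesian mixture: at the root `λ` of a
depth-`D` context tree,
`P^λ_w(x_{1:t}|a_{1:t}) = ∑_{M ∈ C_D} 2^{−Γ_D(M)}·Pr(x_{1:t}|M,a_{1:t})`,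
where `Pr(x_{1:t}|M,a_{1:t}) = ∏_{l ∈ L(M)} Pr_kt(bits routed to leaf l)`. -/
theorem ctw_root_mixture (rt : List Bool → List Bool) (D : ℕ) :
    HasSum
      (fun M : {M : BinTree // M.depth ≤ D} =>
        (2 : ℝ) ^ (-(BinTree.cost D M.1 : ℤ)) * modelProb rt M.1 [])
      (Pw rt D []) := by
  rw [Pw_eq_sum_treesUpTo]
  exact (Equiv.subtypeEquivRight fun _ => mem_treesUpTo).hasSum_iff.mp
    ((treesUpTo D).hasSum fun M => prior D M * modelProb rt M [])
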